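/- Let P be a real symmetric matrix with rows and columns indexed by a finite set H of size m, satisfying P·P = P, and let r be its rank. Then for every 0 ≤ k ≤ r, Σ_{A ⊆ H, |A| = r, det P[A] > 0} Σ_{B ⊆ A, |B| = r−k} det(P[B]) ≤ C(m−r+k, k)·C(r, k). -/

import Mathlib

open Matrix

/-- The principal submatrix `M[A]` of `M` determined by the rows and columns
    with index in `A` (with the convention `det M[∅] = 1`). -/
def psub {ι : Type*} (M : Matrix ι ι ℝ) (A : Finset ι) : Matrix ↥A ↥A ℝ :=
  M.submatrix (fun a => a.1) (fun a => a.1)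

/-! Principal submatrices of a Hermitian projection are positive semidefinite, so the condition
`0 < det P[A]` only drops zero terms. Exchanging the two sums, every `B` with `|B| = r - k` lies in
`C(m - r + k, k)` sets `A` of size `r`, and the sum of the `t × t` principal minors of `P` is, up
to the sign `(-1)^t`, the coefficient of `X^(m-t)` in `charpoly P = X^(m-r) (X-1)^r`, i.e.
`C(r, t)`. -/

open Finset Polynomial

namespace Finset

variable {α : Type*} [Fintype α] [DecidableEq α]

theorem card_filter_powersetCard_univ_superset (B : Finset α) {r : ℕ} (hB : #B ≤ r) :
    #{A ∈ univ.powersetCard r | B ⊆ A} = (Fintype.card α - #B).choose (r - #B) := by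
  rw [← card_compl, ← card_powersetCard]
  refine card_nbij' (· \ B) (B ∪ ·) (fun A h => ?_) (fun C h => ?_) (fun A h => ?_)
    (fun C h => ?_)
  all_goals simp only [coe_filter, Set.mem_ofPred_eq, subset_univ, true_and,
    SetLike.mem_coe, mem_powersetCard] at h ⊢
  · exact ⟨fun x hx => mem_compl.mpr (mem_sdiff.mp hx).2,
      by rw [card_sdiff_of_subset h.2, h.1]⟩
  · have hBC : Disjoint B C := disjoint_right.mpr fun x hx => mem_compl.mp (h.1 hx)
    exact ⟨by rw [card_union_of_disjoint hBC, h.2]; omega, subset_union_left⟩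
  · exact union_sdiff_of_subset h.2
  · exact union_sdiff_cancel_left (disjoint_right.mpr fun x hx => mem_compl.mp (h.1 hx))

theorem sum_powersetCard_sum_powersetCard {M : Type*} [AddCommMonoid M] (f : Finset α → M)
    {r t : ℕ} (htr : t ≤ r) :
    ∑ A ∈ univ.powersetCard r, ∑ B ∈ A.powersetCard t, f B
      = (Fintype.card α - t).choose (r - t) • ∑ B ∈ univ.powersetCard t, f B := by
  rw [sum_comm' (t' := univ.powersetCard t) (s' := fun B => {A ∈ univ.powersetCard r | B ⊆ A})]
  · rw [smul_sum]
    refine sum_congr rfl fun B hB => ?_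
    rw [mem_powersetCard_univ] at hB
    rw [sum_const, card_filter_powersetCard_univ_superset B (hB ▸ htr), hB]
  · intro A B
    simp only [mem_powersetCard, mem_filter, subset_univ, true_and]
    tauto

end Finset

lemma Polynomial.coeff_X_pow_mul_X_sub_one_pow {R : Type*} [CommRing R] {r t m : ℕ}
    (hrm : r ≤ m) (htm : t ≤ m) :
    ((X : R[X]) ^ (m - r) * (X - 1) ^ r).coeff (m - t) = (-1 : R) ^ t * r.choose t := by
  rw [coeff_X_pow_mul', sub_eq_add_neg, ← C_1, ← C_neg, coeff_X_add_C_pow]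
  rcases le_or_gt t r with htr | hrt
  · rw [if_pos (by omega), show m - t - (m - r) = r - t by omega, show r - (r - t) = t by omega,
      Nat.choose_symm htr]
  · rw [if_neg (by omega), Nat.choose_eq_zero_of_lt hrt, Nat.cast_zero, mul_zero]

namespace Matrix.IsHermitian

lemma posSemidef_of_isIdempotentElem {n R : Type*} [Fintype n] [CommRing R]
    [PartialOrder R] [StarRing R] [StarOrderedRing R] {A : Matrix n n R} (hA : A.IsHermitian)
    (hA_idem : IsIdempotentElem A) : A.PosSemidef := by
  simpa only [hA.eq, hA_idem.eq] using posSemidef_conjTranspose_mul_self A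

variable {n 𝕜 : Type*} [Fintype n] [DecidableEq n] [RCLike 𝕜] {A : Matrix n n 𝕜}

lemma eigenvalues_eq_zero_or_one (hA : A.IsHermitian) (hA_idem : IsIdempotentElem A) (i : n) :
    hA.eigenvalues i = 0 ∨ hA.eigenvalues i = 1 :=
  hA_idem.spectrum_subset ℝ (hA.eigenvalues_mem_spectrum_real i)

lemma charpoly_eq_of_isIdempotentElem (hA : A.IsHermitian) (hA_idem : IsIdempotentElem A) :
    A.charpoly = X ^ (Fintype.card n - A.rank) * (X - 1) ^ A.rank := by
  have hterm (i : n) :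
      X - C (hA.eigenvalues i : 𝕜) = if hA.eigenvalues i = 0 then X else X - 1 := by
    rcases hA.eigenvalues_eq_zero_or_one hA_idem i with h | h <;> simp [h]
  have hcard : #{i | ¬hA.eigenvalues i = 0} = A.rank := by
    rw [hA.rank_eq_card_non_zero_eigs, Fintype.card_subtype]
  have hcard' : #{i | hA.eigenvalues i = 0} = Fintype.card n - A.rank := by
    have := card_filter_add_card_filter_not (s := univ) (fun i => hA.eigenvalues i = 0)
    rw [card_univ] at this
    omega
  rw [hA.charpoly_eq, prod_congr rfl fun i _ => hterm i, prod_ite, prod_const, prod_const,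
    hcard, hcard']

lemma sum_det_submatrix_powersetCard (hA : A.IsHermitian) (hA_idem : IsIdempotentElem A)
    (t : ℕ) :
    ∑ s ∈ univ.powersetCard t, (A.submatrix (Subtype.val : s → n) Subtype.val).det
      = (A.rank.choose t : 𝕜) := by
  have hrn : A.rank ≤ Fintype.card n := A.rank_le_card_width
  rcases le_or_gt t (Fintype.card n) with htn | htn
  · have h := A.charpoly_coeff_eq_sum_minors t htn
    rw [hA.charpoly_eq_of_isIdempotentElem hA_idem,
      coeff_X_pow_mul_X_sub_one_pow (R := 𝕜) hrn htn] at h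
    exact (mul_left_cancel₀ (pow_ne_zero t (neg_ne_zero.mpr one_ne_zero)) h).symm
  · rw [powersetCard_eq_empty.mpr (by simpa using htn), Nat.choose_eq_zero_of_lt (by omega)]
    simp

end Matrix.IsHermitian

/-- Let `P` be a real symmetric projection matrix with rows and columns
indexed by a finite set `H` of size `m` and of rank `r`. Then for every `0 ≤ k ≤ r`,
`∑_{A ⊆ H, |A| = r, det P[A] > 0} ∑_{B ⊆ A, |B| = r-k} det(P[B]) ≤ C(m-r+k, k)·C(r, k)`. -/
theorem double_sum_principal_minors_le
    {H : Type*} [Fintype H] [DecidableEq H]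
    (P : Matrix H H ℝ) (hP : P.IsHermitian) (hPP : P * P = P)
    (k : ℕ) (hk : k ≤ P.rank) :
    ∑ A ∈ ((Finset.univ : Finset H).powersetCard P.rank).filter
        (fun A => 0 < (psub P A).det),
        ∑ B ∈ A.powersetCard (P.rank - k), (psub P B).det
      ≤ ((Fintype.card H - P.rank + k).choose k * P.rank.choose k : ℝ) := by
  have hrm : P.rank ≤ Fintype.card H := P.rank_le_card_width
  have hminor_nonneg (B : Finset H) : 0 ≤ (psub P B).det :=
    ((hP.posSemidef_of_isIdempotentElem hPP).submatrix _).det_nonneg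
  have hminor_sum : ∑ B ∈ univ.powersetCard (P.rank - k), (psub P B).det
      = P.rank.choose (P.rank - k) := hP.sum_det_submatrix_powersetCard hPP _
  calc _ ≤ ∑ A ∈ univ.powersetCard P.rank,
          ∑ B ∈ A.powersetCard (P.rank - k), (psub P B).det :=
        sum_le_sum_of_subset_of_nonneg (filter_subset _ _) fun A _ _ =>
          sum_nonneg fun B _ => hminor_nonneg B
    _ = (Fintype.card H - (P.rank - k)).choose (P.rank - (P.rank - k)) •
          ∑ B ∈ univ.powersetCard (P.rank - k), (psub P B).det :=
        sum_powersetCard_sum_powersetCard _ (Nat.sub_le _ _)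
    _ = _ := by
        rw [hminor_sum, Nat.choose_symm hk, nsmul_eq_mul,
          show Fintype.card H - (P.rank - k) = Fintype.card H - P.rank + k by omega,
          show P.rank - (P.rank - k) = k by omega]
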